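/- arXiv:1401.6496 — 5 statements merged into one kernel-verified Lean document; each statement's English description precedes it below -/
import Mathlib

section
/- Let G = (X, E) be a directed graph with balls B_r(x) = {y : d(x,y) ≤ r} and B_r^in(x) = {y : d(y,x) ≤ r}, with deg_r(x) = |B_r(x)|. Then the vector w defined by w_x = 1 / min{deg_r(z) : z ∈ B_r^in(x)} is a fractional transversal of the hypergraph H(G,r), i.e., for every x ∈ X, Σ_{y ∈ B_r(x)} w_y ≥ 1 (assuming all balls are nonempty and finite). -/
open Classical in
/-- `reach E k x y` means there is a directed path of length at most `k`
from `x` to `y`, i.e. `d(x,y) ≤ k` for the directed path metric. -/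
def reach {X : Type*} (E : X → X → Prop) : ℕ → X → X → Prop
  | 0, x, y => x = y
  | (k + 1), x, y => reach E k x y ∨ ∃ z, reach E k x z ∧ E z y

open Classical in
/-- The radius-`r` out-ball `B_r(x) = {y : d(x,y) ≤ r}`. -/
noncomputable def ball {X : Type*} [Fintype X] (E : X → X → Prop) (r : ℕ) (x : X) :
    Finset X :=
  Finset.univ.filter (fun y => reach E r x y)

open Classical in
/-- The radius-`r` in-ball `B_r^in(x) = {y : d(y,x) ≤ r}`. -/
noncomputable def inBall {X : Type*} [Fintype X] (E : X → X → Prop) (r : ℕ) (x : X) :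
    Finset X :=
  Finset.univ.filter (fun y => reach E r y x)

lemma reach_refl {X : Type*} (E : X → X → Prop) (r : ℕ) (x : X) : reach E r x x := by
  induction r with
  | zero => rfl
  | succ k ih => exact Or.inl ih

lemma mem_ball_self {X : Type*} [Fintype X] (E : X → X → Prop) (r : ℕ) (x : X) :
    x ∈ ball E r x := by
  simp [ball, reach_refl]

/-- **A general fractional transversal.**
The vector `w` with `w_x = 1 / min { deg_r(z) : z ∈ B_r^in(x) }` is a fractional
transversal of `H(G,r)`: for every `x`, `∑_{y ∈ B_r(x)} w_y ≥ 1`. -/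
theorem min_inball_degree_fractional_transversal {X : Type*} [Fintype X]
    (E : X → X → Prop) (r : ℕ) :
    ∀ x : X, 1 ≤ ∑ y ∈ ball E r x,
      1 / ((sInf ((fun z => (ball E r z).card) '' {z | z ∈ inBall E r y}) : ℕ) : ℝ) := by
  classical
  intro x
  have hxball : x ∈ ball E r x := mem_ball_self E r x
  have hcardpos : 0 < (ball E r x).card := Finset.card_pos.mpr ⟨x, hxball⟩
  have key : ∀ y ∈ ball E r x,
      (1 : ℝ) / (ball E r x).card ≤
        1 / ((sInf ((fun z => (ball E r z).card) '' {z | z ∈ inBall E r y}) : ℕ) : ℝ) := by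
    intro y hy
    set S : Set ℕ := (fun z => (ball E r z).card) '' {z | z ∈ inBall E r y} with hS
    have hxin : x ∈ inBall E r y := by
      simp only [inBall, Finset.mem_filter, Finset.mem_univ, true_and]
      simpa [ball, Finset.mem_filter] using hy
    have hmem : (ball E r x).card ∈ S := ⟨x, hxin, rfl⟩
    have hle : sInf S ≤ (ball E r x).card := Nat.sInf_le hmem
    have hpos : 0 < sInf S := by
      obtain ⟨z, _, hz⟩ := Nat.sInf_mem (⟨_, hmem⟩ : S.Nonempty)
      simp only [] at hz
      have : 0 < (ball E r z).card := Finset.card_pos.mpr ⟨z, mem_ball_self E r z⟩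
      omega
    apply one_div_le_one_div_of_le
    · exact_mod_cast hpos
    · exact_mod_cast hle
  calc (1 : ℝ) = ∑ y ∈ ball E r x, (1 : ℝ) / (ball E r x).card := by
        rw [Finset.sum_const, nsmul_eq_mul]
        field_simp
    _ ≤ _ := Finset.sum_le_sum key
end

section
/- For the Z channel on {0,1}^n with r=1, the vector w' defined by w'_x = (w_H(x)+2)/((w_H(x)+1)(w_H(x)+3)) for x ≠ 0 and w'_0 = 1 is a fractional transversal: for every x ∈ {0,1}^n, Σ_{y ∈ B_{Z,1}(x)} w'_y ≥ 1. -/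
/-! The ball around `x` contains `x` and its `w_H(x)` one-bit flips. If `w_H(x) ≤ 1`, the ball
contains `0`, of weight `1`. If `k = w_H(x) ≥ 2`, the flips carry weight `(k+1)/(k(k+2))` each,
so the ball sum is at least `(k+2)/((k+1)(k+3)) + (k+1)/(k+2)`, which is `≥ 1` because
`(k+1)(k+3) ≤ (k+2)^2`. -/

/-- Hamming weight of a binary word. -/
def wH {n : ℕ} (x : Fin n → Bool) : ℕ :=
  (Finset.univ.filter (fun i => x i = true)).card

/-- The Z-channel radius-1 ball `B_{Z,1}(x)`: all `y ≤ x` (componentwise) with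
`w_H(x) - w_H(y) ≤ 1`. -/
def ballZ {n : ℕ} (x : Fin n → Bool) : Finset (Fin n → Bool) :=
  Finset.univ.filter (fun y => (∀ i, y i = true → x i = true) ∧ wH x ≤ wH y + 1)

/-- The improved Z-channel weight: `w'_x = (w_H(x)+2)/((w_H(x)+1)(w_H(x)+3))`
for `x ≠ 0`, and `w'_0 = 1`. -/
noncomputable def wZ {n : ℕ} (x : Fin n → Bool) : ℝ :=
  if x = fun _ => false then 1
  else ((wH x : ℝ) + 2) / (((wH x : ℝ) + 1) * ((wH x : ℝ) + 3))

open Finset Function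

variable {n : ℕ}

lemma wZ_nonneg (x : Fin n → Bool) : 0 ≤ wZ x := by
  unfold wZ
  split_ifs <;> positivity

lemma wZ_of_wH_pos {x : Fin n → Bool} (hx : 0 < wH x) :
    wZ x = ((wH x : ℝ) + 2) / (((wH x : ℝ) + 1) * ((wH x : ℝ) + 3)) := by
  have hx0 : x ≠ fun _ => false := by
    rintro rfl
    simp [wH] at hx
  rw [wZ, if_neg hx0]

lemma wH_update_false_add_one {x : Fin n → Bool} {i : Fin n} (hi : x i = true) :
    wH (update x i false) + 1 = wH x := by
  have hsupp : univ.filter (fun j => update x i false j = true)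
      = (univ.filter (fun j => x j = true)).erase i := by
    ext j
    by_cases hj : j = i <;> simp [update_apply, hj]
  rw [wH, hsupp, card_erase_add_one (by simp [hi]), wH]

lemma zero_mem_ballZ_of_wH_le_one {x : Fin n → Bool} (hx : wH x ≤ 1) :
    (fun _ => false) ∈ ballZ x := by
  have hw0 : wH (fun _ : Fin n => false) = 0 := by simp [wH]
  simpa [ballZ, hw0] using hx

lemma update_false_mem_ballZ {x : Fin n → Bool} {i : Fin n} (hi : x i = true) :
    update x i false ∈ ballZ x := by
  refine mem_filter.2 ⟨mem_univ _, fun j hj => ?_, (wH_update_false_add_one hi).ge⟩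
  by_cases hji : j = i
  · simp [hji] at hj
  · simpa [update_apply, hji] using hj

lemma add_sum_update_false_le_sum_ballZ (f : (Fin n → Bool) → ℝ) (hf : ∀ y, 0 ≤ f y)
    (x : Fin n → Bool) :
    f x + ∑ i ∈ univ.filter (fun i => x i = true), f (update x i false)
      ≤ ∑ y ∈ ballZ x, f y := by
  set flips := (univ.filter (fun i => x i = true)).image (fun i => update x i false)
  have hinj : Set.InjOn (fun i => update x i false) (univ.filter (fun i => x i = true)) := by
    intro i hi j _ hij
    by_contra hne
    simpa [update_apply, hne, (mem_filter.1 hi).2] using congrFun hij i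
  have hx : x ∉ flips := by
    simp only [flips, mem_image, mem_filter, mem_univ, true_and, not_exists, not_and]
    intro i hi hflip
    simpa [hi] using congrFun hflip i
  have hsub : insert x flips ⊆ ballZ x := by
    refine insert_subset (by simp [ballZ]) fun y hy => ?_
    obtain ⟨i, hi, rfl⟩ := mem_image.1 hy
    exact update_false_mem_ballZ (mem_filter.1 hi).2
  calc f x + ∑ i ∈ univ.filter (fun i => x i = true), f (update x i false)
      = ∑ y ∈ insert x flips, f y := by rw [sum_insert hx, sum_image hinj]
    _ ≤ ∑ y ∈ ballZ x, f y := sum_le_sum_of_subset_of_nonneg hsub fun y _ _ => hf y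

lemma one_le_self_add_flips (m : ℝ) (hm : 0 ≤ m) :
    1 ≤ (m + 4) / ((m + 3) * (m + 5)) + (m + 2) * ((m + 3) / ((m + 2) * (m + 4))) := by
  have hflips : (m + 2) * ((m + 3) / ((m + 2) * (m + 4))) = (m + 3) / (m + 4) := by
    field_simp
  rw [hflips, div_add_div _ _ (by positivity) (by positivity), le_div_iff₀ (by positivity)]
  nlinarith

/-- **An improved fractional transversal for the Z channel, r = 1.**
For every `x ∈ {0,1}^n`, `∑_{y ∈ B_{Z,1}(x)} w'_y ≥ 1`. -/
theorem z_channel_improved_fractional_transversal (n : ℕ) :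
    ∀ x : Fin n → Bool, 1 ≤ ∑ y ∈ ballZ x, wZ y := by
  intro x
  rcases Nat.lt_or_ge (wH x) 2 with hsmall | hbig
  · calc (1 : ℝ) = wZ (fun _ : Fin n => false) := by simp [wZ]
      _ ≤ ∑ y ∈ ballZ x, wZ y :=
        single_le_sum (fun y _ => wZ_nonneg y) (zero_mem_ballZ_of_wH_le_one (by omega))
  · obtain ⟨m, hm⟩ := Nat.exists_eq_add_of_le' hbig
    have hflip : ∀ i ∈ univ.filter (fun i => x i = true),
        wZ (update x i false) = ((m : ℝ) + 3) / (((m : ℝ) + 2) * ((m : ℝ) + 4)) := by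
      intro i hi
      have hw := wH_update_false_add_one (mem_filter.1 hi).2
      rw [wZ_of_wH_pos (by omega), show wH (update x i false) = m + 1 by omega]
      push_cast
      ring
    have hcard : (univ.filter (fun i => x i = true)).card = m + 2 := hm
    calc (1 : ℝ) ≤ (m + 4) / ((m + 3) * (m + 5)) + (m + 2) * ((m + 3) / ((m + 2) * (m + 4))) :=
          one_le_self_add_flips m m.cast_nonneg
      _ = wZ x + ∑ i ∈ univ.filter (fun i => x i = true), wZ (update x i false) := by
          rw [sum_congr rfl hflip, sum_const, hcard, nsmul_eq_mul, wZ_of_wH_pos (by omega), hm]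
          push_cast
          ring
      _ ≤ ∑ y ∈ ballZ x, wZ y := add_sum_update_false_le_sum_ballZ wZ wZ_nonneg x
end

section
/- For the single-deletion recurrence D_0 = ... = D_{r-2} = 0, D_{r-1} = 1, and D_i/r! + D_{i-1}/(r-1)! + ... + D_{i-r}/0! = 0 for i ≥ r, the sequence satisfies |D_m| ≤ (2r)^{m-r+1} for all m ≥ r-1. -/
/-!
Solving the recurrence for its leading term gives
`|D i| ≤ ∑_{k=1}^r (r!/(r-k)!) |D (i-k)|`. Since `r!/(r-k)! ≤ r^k`, an inductive bound
`|D (i-k)| ≤ (2r)^(i+1-r-k)` makes the `k`-th term at most `(2r)^(i+1-r) / 2^k`, and these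
fractions `2^{-k}` sum to at most `1`. Terms with `i - k < r - 1` vanish by the initial conditions,
which is what keeps the induction alive when `k` exceeds the exponent.
-/

open Finset

lemma Nat.factorial_div_factorial_sub_le_pow {n k : ℕ} (hk : k ≤ n) :
    (n.factorial / (n - k).factorial : ℝ) ≤ (n : ℝ) ^ k := by
  rw [← Nat.cast_div (Nat.factorial_dvd_factorial (Nat.sub_le n k)) (by positivity),
    ← Nat.descFactorial_eq_div hk]
  exact_mod_cast Nat.descFactorial_le_pow n k

lemma sum_range_half_pow_succ_le_one (n : ℕ) : ∑ j ∈ range n, (1 / 2 : ℝ) ^ (j + 1) ≤ 1 := by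
  simp only [pow_succ, ← sum_mul]
  linarith [sum_geometric_two_le n]

lemma pow_mul_two_mul_pow_sub (x : ℝ) {k n : ℕ} (hk : k ≤ n) :
    x ^ k * (2 * x) ^ (n - k) = (2 * x) ^ n * (1 / 2) ^ k := by
  have h2 : (2 : ℝ) ^ k * (1 / 2) ^ k = 1 := by rw [← mul_pow]; norm_num
  rw [← Nat.sub_add_cancel hk, pow_add (2 * x), Nat.add_sub_cancel, mul_pow 2 x k]
  linear_combination -(x ^ k * (2 * x) ^ (n - k)) * h2

lemma abs_le_sum_of_factorial_recurrence {r i : ℕ} {D : ℕ → ℝ}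
    (h : ∑ j ∈ range (r + 1), D (i - j) / (r - j).factorial = 0) :
    |D i| ≤ ∑ j ∈ range r, (r.factorial / (r - (j + 1)).factorial : ℝ) * |D (i - (j + 1))| := by
  rw [sum_range_succ', Nat.sub_zero, Nat.sub_zero] at h
  have hDi := (div_eq_iff (by positivity)).1 (eq_neg_of_add_eq_zero_right h)
  calc |D i| = r.factorial * |∑ j ∈ range r, D (i - (j + 1)) / (r - (j + 1)).factorial| := by
        rw [hDi, abs_mul, abs_neg, Nat.abs_cast, mul_comm]
    _ ≤ r.factorial * ∑ j ∈ range r, |D (i - (j + 1)) / (r - (j + 1)).factorial| := by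
        gcongr
        exact abs_sum_le_sum_abs _ _
    _ = _ := by
        rw [mul_sum]
        refine sum_congr rfl fun j _ => ?_
        rw [abs_div, Nat.abs_cast]
        ring

theorem z_channel_D_bound_general (r : ℕ) (D : ℕ → ℝ)
    (h0 : ∀ i, i < r - 1 → D i = 0) (h1 : D (r - 1) = 1)
    (hrec : ∀ i, r ≤ i →
      ∑ j ∈ Finset.range (r + 1), D (i - j) / ((r - j).factorial : ℝ) = 0) :
    ∀ m, r - 1 ≤ m → |D m| ≤ (2 * r : ℝ) ^ (m + 1 - r) := by
  intro m
  induction m using Nat.strong_induction_on with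
  | _ i ih =>
    intro hi
    rcases lt_or_ge i r with hir | hri
    · obtain rfl : i = r - 1 := by omega
      simp [h1, show r - 1 + 1 - r = 0 by omega]
    have term_le (k : ℕ) (hk : 1 ≤ k) (hkr : k ≤ r) :
        (r.factorial / (r - k).factorial : ℝ) * |D (i - k)| ≤
          (2 * r : ℝ) ^ (i + 1 - r) * (1 / 2) ^ k := by
      rcases lt_or_ge (i - k) (r - 1) with hzero | hle
      · rw [h0 _ hzero, abs_zero, mul_zero]
        positivity
      calc (r.factorial / (r - k).factorial : ℝ) * |D (i - k)|
          ≤ (r : ℝ) ^ k * (2 * r : ℝ) ^ (i + 1 - r - k) := by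
            rw [show i + 1 - r - k = i - k + 1 - r by omega]
            gcongr
            exacts [Nat.factorial_div_factorial_sub_le_pow hkr, ih _ (by omega) hle]
        _ = _ := pow_mul_two_mul_pow_sub _ (by omega)
    calc |D i| ≤ _ := abs_le_sum_of_factorial_recurrence (hrec i hri)
      _ ≤ ∑ j ∈ range r, (2 * r : ℝ) ^ (i + 1 - r) * (1 / 2) ^ (j + 1) :=
          sum_le_sum fun j hj => term_le (j + 1) (by omega) (by simpa using hj)
      _ ≤ (2 * r : ℝ) ^ (i + 1 - r) := by
          rw [← mul_sum]
          exact mul_le_of_le_one_right (by positivity) (sum_range_half_pow_succ_le_one r)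

/-- **Exponential bound on the sequence `D`.**
Fix `r ≥ 1`. If `D_0 = ⋯ = D_{r-2} = 0`, `D_{r-1} = 1`, and
`∑_{j=0}^r D_{i-j}/(r-j)! = 0` for all `i ≥ r`, then `|D_m| ≤ (2r)^{m-r+1}`
for all `m ≥ r-1`. -/
theorem z_channel_D_bound (r : ℕ) (hr : 1 ≤ r) (D : ℕ → ℝ)
    (h0 : ∀ i, i < r - 1 → D i = 0) (h1 : D (r - 1) = 1)
    (hrec : ∀ i, r ≤ i →
      ∑ j ∈ Finset.range (r + 1), D (i - j) / ((r - j).factorial : ℝ) = 0) :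
    ∀ m, r - 1 ≤ m → |D m| ≤ (2 * r : ℝ) ^ (m + 1 - r) :=
  z_channel_D_bound_general r D h0 h1 hrec
end

section
/- The number of binary vectors of length n with exactly ρ runs (2 ≤ ρ ≤ n) and exactly μ middle runs of length 1 (0 ≤ μ ≤ ρ-2) equals 2·binom(ρ-2, μ)·binom(n-ρ+1, ρ-μ-1). -/
/-!
A word is determined by its first letter and its set `C ⊆ {0, …, n - 2}` of change positions,
and the encoding is onto because both sides have `2 ^ n` elements. The word has `1 + |C|` runs,
and its middle 1-runs are the successions of `C`, i.e. the `i ∈ C` with `i + 1 ∈ C`.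
Counting `k`-subsets of `{0, …, m - 1}` with `a` successions by whether they contain `m - 1`,
and then `m - 2`, gives Pascal-type recurrences whose solution is `C(k-1, a) · C(m-k+1, k-a)`.
-/

/-- Extend a length-`n` binary word to `ℕ → Bool` (by `false` beyond `n`). -/
def ext (n : ℕ) (y : Fin n → Bool) : ℕ → Bool :=
  fun i => if h : i < n then y ⟨i, h⟩ else false

/-- `rho n x`: the number of runs (maximal blocks of equal consecutive symbols)
of the length-`n` word `x` (for `n ≥ 1`): one plus the number of positions
where the symbol changes. -/
def rho (n : ℕ) (x : ℕ → Bool) : ℕ :=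
  1 + ((Finset.range (n - 1)).filter (fun i => x i ≠ x (i + 1))).card

/-- `mu n x`: the number of middle runs of length 1 (runs of length exactly 1
that are neither the first nor the last run) of the length-`n` word `x`. -/
def mu (n : ℕ) (x : ℕ → Bool) : ℕ :=
  ((Finset.Icc 1 (n - 2)).filter
    (fun i => x (i - 1) ≠ x i ∧ x i ≠ x (i + 1))).card

open Finset

theorem Finset.card_filter_powersetCard_succ_insert {α : Type*} [DecidableEq α] {x : α}
    {s : Finset α} (hx : x ∉ s) (k : ℕ) (p : Finset α → Prop) [DecidablePred p] :
    #{t ∈ powersetCard (k + 1) (insert x s) | p t} =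
      #{t ∈ powersetCard (k + 1) s | p t} + #{t ∈ powersetCard k s | p (insert x t)} := by
  rw [powersetCard_succ_insert hx, filter_union, filter_image, card_union_of_disjoint,
    card_image_of_injOn]
  · intro t ht u hu htu
    have hxt : x ∉ t := fun h => hx (mem_powersetCard.1 (mem_filter.1 ht).1 |>.1 h)
    have hxu : x ∉ u := fun h => hx (mem_powersetCard.1 (mem_filter.1 hu).1 |>.1 h)
    rw [← erase_insert hxt, ← erase_insert hxu]
    exact congrArg (·.erase x) htu
  · rw [disjoint_left]
    intro t ht ht'
    obtain ⟨u, -, rfl⟩ := mem_image.1 ht'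
    exact hx (mem_powersetCard.1 (mem_filter.1 ht).1 |>.1 (mem_insert_self x u))

def successions (S : Finset ℕ) : ℕ := #{i ∈ S | i + 1 ∈ S}

theorem successions_insert_add_one {m : ℕ} {T : Finset ℕ} (hT : T ⊆ range (m + 1)) :
    successions (insert (m + 1) T) = successions T + if m ∈ T then 1 else 0 := by
  have hlt : ∀ i ∈ T, i < m + 1 := fun i hi => mem_range.1 (hT hi)
  have hm : m + 1 ∉ T := fun h => by have := hlt _ h; omega
  unfold successions
  split_ifs with hmT
  · rw [← card_insert_of_notMem (a := m) (by simp [hm])]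
    congr 1
    ext i
    simp only [mem_filter, mem_insert]
    grind
  · congr 1
    ext i
    simp only [mem_filter, mem_insert]
    grind

theorem successions_lt_card {S : Finset ℕ} (hS : S.Nonempty) : successions S < #S := by
  refine card_lt_card ⟨filter_subset _ _, fun h => ?_⟩
  have hsucc := (mem_filter.1 (h (S.max'_mem hS))).2
  have := S.le_max' _ hsucc
  omega

def succCount (m k a : ℕ) : ℕ := #{S ∈ powersetCard k (range m) | successions S = a}

def topSuccCount (m k a : ℕ) : ℕ :=
  #{T ∈ powersetCard k (range m) | successions (insert m T) = a}

theorem succCount_succ_succ (m k a : ℕ) :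
    succCount (m + 1) (k + 1) a = succCount m (k + 1) a + topSuccCount m k a := by
  rw [succCount, range_add_one, card_filter_powersetCard_succ_insert notMem_range_self]
  rfl

theorem topSuccCount_succ_succ (m k a : ℕ) :
    topSuccCount (m + 1) (k + 1) a =
      succCount m (k + 1) a +
        #{T ∈ powersetCard k (range m) | successions (insert m T) + 1 = a} := by
  rw [topSuccCount, range_add_one, card_filter_powersetCard_succ_insert notMem_range_self,
    succCount]
  congr 2 <;> refine filter_congr fun T hT => ?_ <;> rw [mem_powersetCard] at hT
  · rw [successions_insert_add_one (hT.1.trans (range_subset_range.2 m.le_succ)),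
      if_neg fun h => notMem_range_self (hT.1 h), add_zero]
  · rw [successions_insert_add_one (insert_subset (self_mem_range_succ m)
      (hT.1.trans (range_subset_range.2 m.le_succ))), if_pos (mem_insert_self m T)]

theorem succCount_of_lt {m k : ℕ} (h : m < k) (a : ℕ) : succCount m k a = 0 := by
  rw [succCount, powersetCard_eq_empty.2 (by simpa using h), filter_empty, card_empty]

theorem succCount_succ_of_lt {k a : ℕ} (h : k < a) (m : ℕ) : succCount m (k + 1) a = 0 := by
  refine card_eq_zero.2 (filter_eq_empty_iff.2 fun S hS hSa => ?_)
  have hcard := (mem_powersetCard.1 hS).2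
  have := successions_lt_card (S := S) (card_pos.1 (by omega))
  omega

theorem succCount_eq_of_topSuccCount_eq {k : ℕ}
    (htop : ∀ j a, topSuccCount (j + k) k a = k.choose a * j.choose (k - a)) (j a : ℕ) :
    succCount (j + k) (k + 1) a = k.choose a * j.choose (k + 1 - a) := by
  rcases lt_or_ge k a with hka | hak
  · rw [succCount_succ_of_lt hka, Nat.choose_eq_zero_of_lt hka, zero_mul]
  rw [Nat.succ_sub hak]
  induction j with
  | zero => rw [zero_add, succCount_of_lt k.lt_succ_self, Nat.choose_zero_succ, mul_zero]
  | succ j ih =>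
    rw [add_right_comm, succCount_succ_succ, ih, htop, Nat.choose_succ_succ', mul_add, add_comm]

theorem topSuccCount_eq (k j a : ℕ) :
    topSuccCount (j + k) k a = k.choose a * j.choose (k - a) := by
  induction k generalizing j a with
  | zero =>
    have hsingle : successions {j} = 0 := by simp [successions]
    cases a <;> simp [topSuccCount, filter_singleton, hsingle]
  | succ k ih =>
    rw [← add_assoc, topSuccCount_succ_succ, succCount_eq_of_topSuccCount_eq ih]
    cases a with
    | zero => simp
    | succ a =>
      simp only [Nat.add_right_cancel_iff]
      rw [← topSuccCount, ih, Nat.choose_succ_succ', Nat.add_sub_add_right]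
      ring

theorem succCount_eq (k j a : ℕ) :
    succCount (j + k) (k + 1) a = k.choose a * j.choose (k + 1 - a) :=
  succCount_eq_of_topSuccCount_eq (topSuccCount_eq k) j a

def changes (n : ℕ) (x : ℕ → Bool) : Finset ℕ := {i ∈ range (n - 1) | x i ≠ x (i + 1)}

theorem rho_eq_one_add_card_changes (n : ℕ) (x : ℕ → Bool) : rho n x = 1 + #(changes n x) :=
  rfl

theorem mu_eq_successions_changes (n : ℕ) (x : ℕ → Bool) :
    mu n x = successions (changes n x) := by
  refine (card_nbij' (· + 1) (· - 1) ?_ ?_ ?_ ?_).symm <;> intro i hi <;>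
    simp only [changes, coe_filter, mem_filter, mem_range, Set.mem_ofPred_eq,
      mem_Icc] at hi ⊢
  · obtain ⟨⟨-, h1⟩, h2, h3⟩ := hi
    exact ⟨⟨by omega, by omega⟩, by rwa [Nat.add_sub_cancel], h3⟩
  · obtain ⟨⟨h1, h2⟩, h3, h4⟩ := hi
    rw [Nat.sub_add_cancel h1]
    exact ⟨⟨by omega, h3⟩, by omega, h4⟩
  · omega
  · omega

theorem eq_of_changes_eq {n : ℕ} {x x' : ℕ → Bool} (h0 : x 0 = x' 0)
    (h : changes n x = changes n x') : ∀ i < n, x i = x' i := by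
  intro i hi
  induction i with
  | zero => exact h0
  | succ i ih =>
    have hmem : i ∈ changes n x ↔ i ∈ changes n x' := by rw [h]
    simp only [changes, mem_filter, mem_range, ih (by omega), and_congr_right_iff] at hmem
    have := hmem (by omega)
    revert this
    cases x' i <;> cases x (i + 1) <;> cases x' (i + 1) <;> simp

theorem ext_of_lt {n i : ℕ} (h : i < n) (y : Fin n → Bool) : ext n y i = y ⟨i, h⟩ := dif_pos h

def encode (n : ℕ) (y : Fin n → Bool) : Bool × Finset ℕ := (ext n y 0, changes n (ext n y))

theorem encode_injective (n : ℕ) : Function.Injective (encode n) := by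
  intro y z h
  obtain ⟨h0, hchanges⟩ := Prod.ext_iff.1 h
  funext i
  have := eq_of_changes_eq h0 hchanges i i.2
  rwa [ext_of_lt i.2, ext_of_lt i.2] at this

theorem image_encode {n : ℕ} (hn : 0 < n) :
    univ.image (encode n) = univ ×ˢ (range (n - 1)).powerset := by
  refine eq_of_subset_of_card_le (image_subset_iff.2 fun y _ => ?_) ?_
  · exact mem_product.2 ⟨mem_univ _, mem_powerset.2 (filter_subset _ _)⟩
  · rw [card_image_of_injective _ (encode_injective n), card_product, card_powerset, card_range,
      card_univ, card_univ, Fintype.card_bool, Fintype.card_fun, Fintype.card_bool,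
      Fintype.card_fin, ← pow_succ', Nat.sub_add_cancel hn]

theorem card_words_eq_two_mul_succCount {n : ℕ} (hn : 0 < n) (ρ μ : ℕ) (hρ : 0 < ρ) :
    #{y : Fin n → Bool | rho n (ext n y) = ρ ∧ mu n (ext n y) = μ} =
      2 * succCount (n - 1) (ρ - 1) μ := by
  let q : Finset ℕ → Prop := fun S => 1 + #S = ρ ∧ successions S = μ
  calc #{y : Fin n → Bool | rho n (ext n y) = ρ ∧ mu n (ext n y) = μ}
      = #((univ.filter fun y => q (encode n y).2).image (encode n)) := by
        rw [card_image_of_injective _ (encode_injective n)]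
        simp only [q, encode, rho_eq_one_add_card_changes, mu_eq_successions_changes]
        rfl
    _ = #(univ ×ˢ (range (n - 1)).powerset.filter q) := by
        rw [← filter_image (p := fun x : Bool × Finset ℕ => q x.2), image_encode hn]
        convert congrArg card (filter_product_right (s := univ) q)
    _ = 2 * succCount (n - 1) (ρ - 1) μ := by
        rw [card_product, card_univ, Fintype.card_bool, succCount, powersetCard_eq_filter,
          filter_filter]
        congr 3
        ext S
        omega

theorem count_words_by_runs_general (n ρ μ : ℕ) (h2 : 2 ≤ ρ) (hn : ρ ≤ n) :
    ((Finset.univ : Finset (Fin n → Bool)).filter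
        (fun y => rho n (ext n y) = ρ ∧ mu n (ext n y) = μ)).card =
      2 * (ρ - 2).choose μ * (n - ρ + 1).choose (ρ - μ - 1) := by
  obtain ⟨k, rfl⟩ := Nat.exists_eq_add_of_le' h2
  have hlen : n - 1 = (n - (k + 2) + 1) + k := by omega
  have hsize : k + 2 - 1 = k + 1 := rfl
  have hsub : k + 2 - μ - 1 = k + 1 - μ := by omega
  rw [card_words_eq_two_mul_succCount (by omega) _ _ (by omega), hlen, hsize, succCount_eq,
    Nat.add_sub_cancel, hsub, mul_assoc]

/-- **Counting words by runs and middle-1-runs.**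
For `2 ≤ ρ ≤ n` and `μ ≤ ρ - 2`, the number of binary words of length `n` with
exactly `ρ` runs and exactly `μ` middle-1-runs is
`2·C(ρ-2, μ)·C(n-ρ+1, ρ-μ-1)`. -/
theorem count_words_by_runs (n ρ μ : ℕ) (h2 : 2 ≤ ρ) (hn : ρ ≤ n)
    (hμ : μ ≤ ρ - 2) :
    ((Finset.univ : Finset (Fin n → Bool)).filter
        (fun y => rho n (ext n y) = ρ ∧ mu n (ext n y) = μ)).card =
      2 * (ρ - 2).choose μ * (n - ρ + 1).choose (ρ - μ - 1) :=
  count_words_by_runs_general n ρ μ h2 hn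
end

section
/- For the single-deletion channel, the weight assignment on {0,1}^{n-1} given by w_x = 1/ρ(x) if μ(x) ≤ 1 and w_x = (1/ρ(x))·(1 - μ(x)/ρ(x)²) otherwise, is a fractional transversal: for every x ∈ {0,1}^n, Σ_{y ∈ B_{D,1}(x)} w_y ≥ 1, where B_{D,1}(x) is the set of length-(n-1) vectors obtainable from x by one deletion. -/
/-- The weight assigned to a length-`m` word `y`: `1/ρ(y)` if `μ(y) ≤ 1`, and
`(1/ρ(y))(1 - μ(y)/ρ(y)²)` otherwise. -/
noncomputable def wt (m : ℕ) (y : Fin m → Bool) : ℝ :=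
  if mu m (ext m y) ≤ 1 then 1 / (rho m (ext m y) : ℝ)
  else (1 / (rho m (ext m y) : ℝ)) * (1 - (mu m (ext m y) : ℝ) / (rho m (ext m y) : ℝ) ^ 2)

/-- The single-deletion ball `B_{D,1}(x) ⊆ {0,1}^{n-1}`: all words obtained from
the length-`n` word `x` by deleting one coordinate. -/
def ballD (n : ℕ) (x : Fin n → Bool) : Finset (Fin (n - 1) → Bool) :=
  (Finset.range n).image
    (fun i => fun j : Fin (n - 1) =>
      if (j : ℕ) < i then ext n x j else ext n x ((j : ℕ) + 1))

/-!
Deleting any bit of a run gives the same word, so `ballD n x` is the injective image of the `ρ(x)`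
run starts of `x`. Deleting a middle run of length 1 merges its two neighbouring runs, which lowers
`ρ` by 2 and `μ` by at least 1; any other deletion does not raise `ρ` and raises `μ` by at most 1.
On the region `μ = 0 ∨ μ + 2 ≤ ρ`, where every word lies, the weight is antitone in both arguments,
so the sum is at least `μ w(ρ - 2, μ - 1) + (ρ - μ) w(ρ, μ + 1)`. For `μ ≥ 1`, writing `μ = t + 1`
and `ρ = t + s + 3`, this minus 1 is, after clearing denominators, a polynomial in `s, t` with
nonnegative coefficients.
-/

open Finset hiding ext

lemma Bool.eq_of_ne_of_ne {a b c : Bool} (hab : a ≠ b) (hbc : b ≠ c) : a = c := by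
  revert a b c; decide

def eraseAt (X : ℕ → Bool) (i : ℕ) : ℕ → Bool := fun j => if j < i then X j else X (j + 1)

def runBoundaries (n : ℕ) (X : ℕ → Bool) : Finset ℕ :=
  (range (n - 1)).filter (fun p => X p ≠ X (p + 1))

def middleSingletons (n : ℕ) (X : ℕ → Bool) : Finset ℕ :=
  (Icc 1 (n - 2)).filter (fun i => X (i - 1) ≠ X i ∧ X i ≠ X (i + 1))

def runStarts (n : ℕ) (X : ℕ → Bool) : Finset ℕ :=
  (range n).filter (fun i => i = 0 ∨ X (i - 1) ≠ X i)

lemma rho_eq_card_runBoundaries (n : ℕ) (X : ℕ → Bool) :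
    rho n X = (runBoundaries n X).card + 1 :=
  add_comm _ _

lemma mu_eq_card_middleSingletons (n : ℕ) (X : ℕ → Bool) :
    mu n X = (middleSingletons n X).card :=
  rfl

lemma rho_pos (n : ℕ) (X : ℕ → Bool) : 0 < rho n X := by
  rw [rho_eq_card_runBoundaries]; omega

lemma rho_eraseAt_le (X : ℕ → Bool) (i k : ℕ) : rho k (eraseAt X i) ≤ rho (k + 1) X := by
  rw [rho_eq_card_runBoundaries, rho_eq_card_runBoundaries, add_le_add_iff_right]
  -- a boundary between the two neighbours of the deleted bit is charged to one beside that bit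
  refine card_le_card_of_injOn (fun j => if j + 1 < i then j else if i ≤ j then j + 1
      else if X j ≠ X (j + 1) then j else j + 1) (fun j hj => ?_) (fun j _ j' _ h => by grind)
  simp only [runBoundaries, coe_filter, mem_range, Set.mem_ofPred_eq, eraseAt] at hj ⊢
  grind

lemma mu_eraseAt_le (X : ℕ → Bool) (i k : ℕ) : mu k (eraseAt X i) ≤ mu (k + 1) X + 1 := by
  rw [mu_eq_card_middleSingletons, mu_eq_card_middleSingletons]
  -- Only the positions `i - 1` and `i` of the shorter word can be new middle singletons, and the
  -- one that is new is sent to `0`. Both new would need `X (i - 1) = X i = X (i + 1)`, but then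
  -- the shorter word has equal letters at `i - 1` and `i`.
  refine (card_le_card_of_injOn (t := insert 0 (middleSingletons (k + 1) X))
    (fun j => if j + 1 < i then j else if i + 1 ≤ j then j + 1
      else if j = i then (if X i ≠ X (i + 1) then j + 1 else 0)
      else (if X (i - 1) ≠ X i then j else 0)) ?_ ?_).trans (card_insert_le _ _)
  · intro j hj
    simp only [middleSingletons, coe_filter, coe_insert, mem_Icc, Set.mem_ofPred_eq,
      Set.mem_insert_iff, eraseAt] at hj ⊢
    grind
  · intro j hj j' hj' h
    simp only [middleSingletons, eraseAt] at hj hj' h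
    grind

lemma rho_eraseAt_add_two_le {X : ℕ → Bool} {i k : ℕ} (hi : i ∈ middleSingletons (k + 1) X) :
    rho k (eraseAt X i) + 2 ≤ rho (k + 1) X := by
  simp only [middleSingletons, mem_filter, mem_Icc] at hi
  have hX := Bool.eq_of_ne_of_ne hi.2.1 hi.2.2
  have hi' : i - 1 ∈ runBoundaries (k + 1) X ∧ i ∈ runBoundaries (k + 1) X := by
    simp only [runBoundaries, mem_filter, mem_range]; grind
  have hi'' : i ∈ (runBoundaries (k + 1) X).erase (i - 1) := mem_erase.mpr ⟨by omega, hi'.2⟩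
  have h := card_le_card_of_injOn (fun j => if j + 1 < i then j else j + 1)
    (s := runBoundaries k (eraseAt X i)) (t := ((runBoundaries (k + 1) X).erase (i - 1)).erase i)
    (fun j hj => by
      simp only [runBoundaries, coe_filter, coe_erase, mem_range, Set.mem_ofPred_eq, eraseAt,
        Set.mem_sdiff, Set.mem_singleton_iff] at hj ⊢
      grind) (fun j _ j' _ h => by grind)
  have := card_erase_add_one hi''
  have := card_erase_add_one hi'.1
  rw [rho_eq_card_runBoundaries, rho_eq_card_runBoundaries]
  omega

lemma mu_eraseAt_add_one_le {X : ℕ → Bool} {i k : ℕ} (hi : i ∈ middleSingletons (k + 1) X) :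
    mu k (eraseAt X i) + 1 ≤ mu (k + 1) X := by
  have hX := Bool.eq_of_ne_of_ne (mem_filter.mp hi).2.1 (mem_filter.mp hi).2.2
  have h := card_le_card_of_injOn (fun j => if j + 1 < i then j else j + 1)
    (s := middleSingletons k (eraseAt X i)) (t := (middleSingletons (k + 1) X).erase i)
    (fun j hj => by
      simp only [middleSingletons, coe_filter, coe_erase, mem_Icc, Set.mem_ofPred_eq, eraseAt,
        Set.mem_sdiff, Set.mem_singleton_iff] at hj hi ⊢
      grind) (fun j _ j' _ h => by grind)
  have := card_erase_add_one hi
  rw [mu_eq_card_middleSingletons, mu_eq_card_middleSingletons]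
  omega

lemma middleSingletons_ssubset_runBoundaries {n : ℕ} {X : ℕ → Bool}
    (h : (middleSingletons n X).Nonempty) : middleSingletons n X ⊂ runBoundaries n X := by
  obtain ⟨p, hp, hmin⟩ := exists_min_image _ id h
  simp only [middleSingletons, mem_filter, mem_Icc, id] at hp hmin
  refine ssubset_iff_of_subset (fun q hq => ?_) |>.mpr ⟨p - 1, ?_, fun hp' => ?_⟩
  · simp only [middleSingletons, runBoundaries, mem_filter, mem_Icc, mem_range] at hq ⊢
    exact ⟨by omega, hq.2.2⟩
  · simp only [runBoundaries, mem_filter, mem_range]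
    grind
  · simp only [middleSingletons, mem_filter, mem_Icc] at hp'
    have := hmin _ hp'
    omega

lemma mu_add_two_le_rho {n : ℕ} {X : ℕ → Bool} (h : mu n X ≠ 0) : mu n X + 2 ≤ rho n X := by
  rw [mu_eq_card_middleSingletons] at h ⊢
  have := card_lt_card (middleSingletons_ssubset_runBoundaries (card_ne_zero.mp h))
  rw [rho_eq_card_runBoundaries]
  omega

lemma eraseAt_succ_of_eq {X : ℕ → Bool} {i : ℕ} (h : X i = X (i + 1)) :
    eraseAt X (i + 1) = eraseAt X i := by
  funext j; simp only [eraseAt]; grind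

lemma exists_mem_runStarts_eraseAt_eq {n i : ℕ} (X : ℕ → Bool) (hi : i < n) :
    ∃ i' ∈ runStarts n X, eraseAt X i' = eraseAt X i := by
  induction i with
  | zero => exact ⟨0, by simp [runStarts, hi], rfl⟩
  | succ i ih =>
    by_cases h : X i = X (i + 1)
    · obtain ⟨i', hi', he⟩ := ih (by omega)
      exact ⟨i', hi', he.trans (eraseAt_succ_of_eq h).symm⟩
    · exact ⟨i + 1, by simp [runStarts, hi, h], rfl⟩

lemma injOn_eraseAt_runStarts (n : ℕ) (X : ℕ → Bool) : Set.InjOn (eraseAt X) (runStarts n X) := by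
  intro a ha b hb he
  by_contra hne
  wlog hab : a < b generalizing a b
  · exact this hb ha he.symm (Ne.symm hne) (by omega)
  have := congrFun he (b - 1)
  simp only [runStarts, coe_filter, mem_range, Set.mem_ofPred_eq, eraseAt] at hb this
  grind

lemma card_runStarts (k : ℕ) (X : ℕ → Bool) : (runStarts (k + 1) X).card = rho (k + 1) X := by
  rw [runStarts, rho, card_filter, card_filter, sum_range_succ', add_comm]
  simp

lemma middleSingletons_subset_runStarts (n : ℕ) (X : ℕ → Bool) :
    middleSingletons n X ⊆ runStarts n X := fun i hi => by
  simp only [middleSingletons, runStarts, mem_filter, mem_Icc, mem_range] at hi ⊢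
  exact ⟨by omega, Or.inr hi.2.1⟩

lemma ext_eraseAt {n i : ℕ} (x : Fin n → Bool) (hi : i < n) :
    ext (n - 1) (fun j => eraseAt (ext n x) i j) = eraseAt (ext n x) i := by
  funext j
  by_cases hj : j < n - 1
  · simp [ext, eraseAt, hj]
  · simp [ext, eraseAt, hj, show ¬j < i by omega, show ¬j + 1 < n by omega]

lemma ballD_eq_image_runStarts (n : ℕ) (x : Fin n → Bool) :
    ballD n x =
      (runStarts n (ext n x)).image (fun i (j : Fin (n - 1)) => eraseAt (ext n x) i j) := by
  refine (image_subset_image (filter_subset _ _)).antisymm' fun _ hy => ?_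
  obtain ⟨i, hi, rfl⟩ := mem_image.mp hy
  obtain ⟨i', hi', he⟩ := exists_mem_runStarts_eraseAt_eq (ext n x) (mem_range.mp hi)
  exact mem_image.mpr ⟨i', hi', congrArg (fun Y (j : Fin (n - 1)) => Y j) he⟩

noncomputable def runWeight (r m : ℕ) : ℝ :=
  if m ≤ 1 then 1 / (r : ℝ) else (1 / (r : ℝ)) * (1 - (m : ℝ) / (r : ℝ) ^ 2)

lemma wt_eq_runWeight (m : ℕ) (y : Fin m → Bool) :
    wt m y = runWeight (rho m (ext m y)) (mu m (ext m y)) := rfl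

lemma runWeight_le_inv (r m : ℕ) : runWeight r m ≤ 1 / (r : ℝ) := by
  unfold runWeight
  split_ifs
  · rfl
  · exact mul_le_of_le_one_right (by positivity) (sub_le_self _ (by positivity))

lemma runWeight_of_two_le {r m : ℕ} (hm : 2 ≤ m) :
    runWeight r m = ((r : ℝ) ^ 2 - m) / (r : ℝ) ^ 3 := by
  rw [runWeight, if_neg (by omega)]
  rcases Nat.eq_zero_or_pos r with rfl | hr
  · simp
  · field_simp

lemma runWeight_anti {r m r' m' : ℕ} (hr' : 0 < r') (hr : r' ≤ r) (hm : m' ≤ m)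
    (hm' : m' ≠ 0 → m' + 2 ≤ r') : runWeight r m ≤ runWeight r' m' := by
  by_cases h1 : m' ≤ 1
  · calc runWeight r m ≤ 1 / (r : ℝ) := runWeight_le_inv r m
      _ ≤ 1 / (r' : ℝ) := one_div_le_one_div_of_le (by exact_mod_cast hr') (by exact_mod_cast hr)
      _ = runWeight r' m' := by rw [runWeight, if_pos h1]
  obtain ⟨u, rfl⟩ : ∃ u, r' = m' + 2 + u := ⟨r' - (m' + 2), by omega⟩
  obtain ⟨d, rfl⟩ : ∃ d, r = m' + 2 + u + d := ⟨r - (m' + 2 + u), by omega⟩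
  rw [runWeight_of_two_le (by omega), runWeight_of_two_le (by omega),
    div_le_div_iff₀ (by positivity) (by positivity)]
  have hm : (m' : ℝ) ≤ m := by exact_mod_cast hm
  calc (((m' + 2 + u + d : ℕ) : ℝ) ^ 2 - m) * ((m' + 2 + u : ℕ) : ℝ) ^ 3
      ≤ (((m' + 2 + u + d : ℕ) : ℝ) ^ 2 - m') * ((m' + 2 + u : ℕ) : ℝ) ^ 3 := by gcongr
    _ ≤ (((m' + 2 + u : ℕ) : ℝ) ^ 2 - m') * ((m' + 2 + u + d : ℕ) : ℝ) ^ 3 := by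
      rw [← sub_nonneg]; push_cast; ring_nf; positivity

lemma div_le_runWeight (r m : ℕ) : ((r : ℝ) ^ 2 - m) / (r : ℝ) ^ 3 ≤ runWeight r m := by
  by_cases hm : 2 ≤ m
  · exact (runWeight_of_two_le hm).ge
  rw [runWeight, if_pos (by omega)]
  rcases Nat.eq_zero_or_pos r with rfl | hr
  · simp
  · rw [div_le_div_iff₀ (by positivity) (by positivity)]
    nlinarith [(by positivity : (0 : ℝ) ≤ m)]

lemma one_le_mul_runWeight_add_mul_runWeight {r m : ℕ} (hr : 0 < r) (hm : m ≠ 0 → m + 2 ≤ r) :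
    1 ≤ m * runWeight (r - 2) (m - 1) + ((r - m : ℕ) : ℝ) * runWeight r (m + 1) := by
  rcases Nat.eq_zero_or_pos m with rfl | hm0
  · rw [Nat.cast_zero, zero_mul, zero_add, Nat.sub_zero, runWeight, if_pos le_rfl]
    exact (mul_one_div_cancel (Nat.cast_pos.mpr hr).ne').ge
  obtain ⟨t, rfl⟩ : ∃ t, m = t + 1 := ⟨m - 1, by omega⟩
  obtain ⟨s, rfl⟩ : ∃ s, r = t + 3 + s := ⟨r - (t + 3), by have := hm (by omega); omega⟩
  rw [show t + 3 + s - 2 = t + 1 + s by omega, show t + 3 + s - (t + 1) = s + 2 by omega,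
    Nat.add_sub_cancel, runWeight_of_two_le (r := t + 3 + s) (m := t + 1 + 1) (by omega)]
  refine le_trans ?_
    (add_le_add (mul_le_mul_of_nonneg_left (div_le_runWeight _ _) (by positivity)) le_rfl)
  rw [mul_div_assoc', mul_div_assoc', div_add_div _ _ (by positivity) (by positivity),
    le_div_iff₀ (by positivity), ← sub_nonneg]
  push_cast; ring_nf; positivity

lemma one_le_sum_runWeight_eraseAt {n : ℕ} (hn : 1 ≤ n) (X : ℕ → Bool) :
    1 ≤ ∑ i ∈ runStarts n X, runWeight (rho (n - 1) (eraseAt X i)) (mu (n - 1) (eraseAt X i)) := by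
  obtain ⟨k, rfl⟩ : ∃ k, n = k + 1 := ⟨n - 1, by omega⟩
  rw [Nat.add_sub_cancel]
  set r := rho (k + 1) X
  set m := mu (k + 1) X
  have hBS := middleSingletons_subset_runStarts (k + 1) X
  have h_mid : ∀ i ∈ middleSingletons (k + 1) X,
      runWeight (r - 2) (m - 1) ≤ runWeight (rho k (eraseAt X i)) (mu k (eraseAt X i)) :=
    fun i hi => runWeight_anti (rho_pos _ _) (by have := rho_eraseAt_add_two_le hi; omega)
      (by have := mu_eraseAt_add_one_le hi; omega) mu_add_two_le_rho
  have h_other : ∀ i ∈ runStarts (k + 1) X \ middleSingletons (k + 1) X,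
      runWeight r (m + 1) ≤ runWeight (rho k (eraseAt X i)) (mu k (eraseAt X i)) :=
    fun i _ => runWeight_anti (rho_pos _ _) (rho_eraseAt_le X i k) (mu_eraseAt_le X i k)
      mu_add_two_le_rho
  have hcardB : (middleSingletons (k + 1) X).card = m := rfl
  have hcard : (runStarts (k + 1) X \ middleSingletons (k + 1) X).card = r - m := by
    rw [card_sdiff_of_subset hBS, card_runStarts]; rfl
  calc 1 ≤ m * runWeight (r - 2) (m - 1) + ((r - m : ℕ) : ℝ) * runWeight r (m + 1) :=
        one_le_mul_runWeight_add_mul_runWeight (rho_pos _ _) mu_add_two_le_rho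
    _ ≤ ∑ i ∈ middleSingletons (k + 1) X, runWeight (rho k (eraseAt X i)) (mu k (eraseAt X i))
        + ∑ i ∈ runStarts (k + 1) X \ middleSingletons (k + 1) X,
            runWeight (rho k (eraseAt X i)) (mu k (eraseAt X i)) := by
        gcongr
        · simpa [hcardB] using card_nsmul_le_sum _ _ _ h_mid
        · simpa [hcard] using card_nsmul_le_sum _ _ _ h_other
    _ = _ := by rw [add_comm, sum_sdiff hBS]

/-- **Improved fractional transversal for the single-deletion channel.**
For every `x ∈ {0,1}^n`, `∑_{y ∈ B_{D,1}(x)} w_y ≥ 1`, where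
`w_y = 1/ρ(y)` if `μ(y) ≤ 1` and `w_y = (1/ρ(y))(1 - μ(y)/ρ(y)²)` otherwise. -/
theorem deletion_fractional_transversal (n : ℕ) (hn : 1 ≤ n) :
    ∀ x : Fin n → Bool, 1 ≤ ∑ y ∈ ballD n x, wt (n - 1) y := by
  intro x
  have hext : ∀ i ∈ runStarts n (ext n x),
      ext (n - 1) (fun j => eraseAt (ext n x) i j) = eraseAt (ext n x) i :=
    fun i hi => ext_eraseAt x (mem_range.mp (mem_filter.mp hi).1)
  rw [ballD_eq_image_runStarts, sum_image fun a ha b hb he =>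
    injOn_eraseAt_runStarts n _ ha hb (by rw [← hext a ha, ← hext b hb]; exact congrArg _ he)]
  refine (one_le_sum_runWeight_eraseAt hn (ext n x)).trans_eq (sum_congr rfl fun i hi => ?_)
  rw [wt_eq_runWeight, hext i hi]
end
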